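/- Let n ≥ 5 be an integer and let N = Z/2Z × Z/2Z × Z/2^{n-2}Z. Then Hol(N) contains no regular subgroup isomorphic to the generalised quaternion group Q_{2^n} (QuaternionGroup 2^{n-2}) and no regular subgroup isomorphic to the dihedral group D_{2^n} (DihedralGroup 2^{n-1}). -/

import Mathlib

/-- The group structure on `AddAut N` (composition), as in the older Mathlib. -/
instance AddAut.group (A : Type*) [Add A] : Group (AddAut A) where
  mul g h := AddEquiv.trans h g
  one := AddEquiv.refl _
  inv := AddEquiv.symm
  mul_assoc _ _ _ := rfl
  one_mul _ := rfl
  mul_one _ := rfl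
  inv_mul_cancel := AddEquiv.self_trans_symm

/-- The natural action of `AddAut N` on `Multiplicative N`. -/
def holPhi (N : Type) [AddCommGroup N] : AddAut N →* MulAut (Multiplicative N) where
  toFun f := AddEquiv.toMultiplicative f
  map_one' := by ext x; rfl
  map_mul' f g := by ext x; rfl

/-- The holomorph of an abelian group `N`, i.e. the semidirect product `N ⋊ Aut(N)`. -/
abbrev Hol (N : Type) [AddCommGroup N] :=
  SemidirectProduct (Multiplicative N) (AddAut N) (holPhi N)

/-- The action of the holomorph on `N`: `(v, A) • x = v + A x`. -/
def holSmul {N : Type} [AddCommGroup N] (g : Hol N) (x : N) : N :=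
  (Multiplicative.toAdd g.left) + g.right x

/-- A subgroup of `Hol N` is regular if its action on `N` is simply transitive. -/
def IsRegularSubgroup {N : Type} [AddCommGroup N] (G : Subgroup (Hol N)) : Prop :=
  ∀ x y : N, ∃! g : G, holSmul (g : Hol N) x = y

/-!
For `g = (v, A) ∈ Hol N` one has `g ^ k = (∑_{i<k} A^i v, A^k)` and `A^k - 1 = (A - 1) ∑_{i<k} A^i`,
so `g ^ (2^m) = 1` as soon as `S = ∑_{i<2^m} A^i` vanishes. Take `N = C₂ × C₂ × C_{2^m}` and
`A` of `2`-power order. Its reduction to `N/2N ≅ 𝔽₂³` is unipotent, so `A⁴ ≡ 1` modulo `2N`;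
and `A` acts on the cyclic group `2N` by an odd scalar, so `A ≡ 1` on `2N` modulo `4N`.
If `b` induces the identity on `2^j N / 2^(j+1) N`, then `1 + b + ⋯ + b^(2^k - 1)`, which is
`(1 + b) ∑_{i<2^(k-1)} (b²)^i`, maps `2^j N` into `2^(j+k) N`. In
`S = (1 + A + A² + A³) ∑_{i<2^(m-2)} (A⁴)^i` the second factor therefore maps `N` into
`2^(m-2) N` and the first maps that into `2^m N = 0`. Hence `Hol N` has no element of order
`2^(m+1) = 2^(n-1)`, whereas `Q_{2^n}` and `D_{2^n}` do.
-/

open Finset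

theorem geom_sum_mul_geom_sum_pow {R : Type*} [Semiring R] (x : R) (k n : ℕ) :
    (∑ j ∈ range k, x ^ j) * ∑ i ∈ range n, (x ^ k) ^ i = ∑ i ∈ range (k * n), x ^ i := by
  induction n with
  | zero => simp
  | succ n ih =>
    rw [sum_range_succ, mul_add, ih, Nat.mul_succ, sum_range_add, sum_mul]
    simp_rw [← pow_mul, ← pow_add, add_comm]

theorem Module.End.pow_char_pow_eq_one {K V : Type*} [Field K] [AddCommGroup V] [Module K V]
    [FiniteDimensional K V] {p : ℕ} [Fact p.Prime] [CharP K p] {T : Module.End K V} {k e : ℕ}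
    (hT : T ^ p ^ k = 1) (he : Module.finrank K V ≤ p ^ e) : T ^ p ^ e = 1 := by
  have frobenius (j : ℕ) : (T - 1) ^ p ^ j = T ^ p ^ j - 1 := by
    simpa using congrArg (Polynomial.aeval T)
      (sub_pow_char_pow (p := p) (Polynomial.X : Polynomial K) 1 (n := j))
  have hnil : IsNilpotent (T - 1) := ⟨p ^ k, by rw [frobenius, hT, sub_self]⟩
  have hfin : (T - 1) ^ Module.finrank K V = 0 := by
    simpa only [(LinearMap.isNilpotent_iff_charpoly _).mp hnil, map_pow, Polynomial.aeval_X]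
      using (T - 1).aeval_self_charpoly
  rw [← sub_eq_zero, ← frobenius]
  exact pow_eq_zero_of_le he hfin

def AddAut.toIntEnd (N : Type*) [AddCommGroup N] : AddAut N →* Module.End ℤ N where
  toFun A := A.toAddMonoidHom.toIntLinearMap
  map_one' := rfl
  map_mul' _ _ := rfl

@[simp]
theorem AddAut.toIntEnd_apply {N : Type*} [AddCommGroup N] (A : AddAut N) (x : N) :
    AddAut.toIntEnd N A x = A x :=
  rfl

theorem AddAut.toIntEnd_injective (N : Type*) [AddCommGroup N] :
    Function.Injective (AddAut.toIntEnd N) :=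
  fun _ _ h => AddEquiv.ext (LinearMap.congr_fun h)

namespace Hol

variable {N : Type} [AddCommGroup N]

theorem right_pow (g : Hol N) (k : ℕ) : (g ^ k).right = g.right ^ k :=
  map_pow SemidirectProduct.rightHom g k

theorem toAdd_left_pow (g : Hol N) (k : ℕ) :
    Multiplicative.toAdd (g ^ k).left =
      (∑ i ∈ range k, AddAut.toIntEnd N g.right ^ i) (Multiplicative.toAdd g.left) := by
  induction k with
  | zero => simp
  | succ k ih =>
    rw [pow_succ, SemidirectProduct.mul_left, toAdd_mul, ih, sum_range_succ, right_pow]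
    simp [holPhi, ← map_pow]

theorem pow_eq_one_of_geom_sum_eq_zero (g : Hol N) {k : ℕ}
    (h : ∑ i ∈ range k, AddAut.toIntEnd N g.right ^ i = 0) : g ^ k = 1 := by
  refine SemidirectProduct.ext (by simpa [h] using toAdd_left_pow g k) ?_
  apply AddAut.toIntEnd_injective
  rw [right_pow, map_pow, SemidirectProduct.one_right, map_one, ← sub_eq_zero, ← mul_geom_sum, h,
    mul_zero]

end Hol

section TwoAdic

variable {N : Type*} [AddCommGroup N]

/-- `b` induces the identity on `2^j N / 2^(j+1) N`. -/
def ActsTriviallyModTwo (j : ℕ) (b : Module.End ℤ N) : Prop :=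
  ∀ x, ∃ y, b (2 ^ j • x) = 2 ^ j • x + 2 ^ (j + 1) • y

theorem ActsTriviallyModTwo.of_le {i j : ℕ} {b : Module.End ℤ N} (hb : ActsTriviallyModTwo i b)
    (hij : i ≤ j) : ActsTriviallyModTwo j b := by
  induction j, hij using Nat.le_induction with
  | base => exact hb
  | succ j _ ih =>
    intro x
    obtain ⟨y, hy⟩ := ih x
    refine ⟨y, ?_⟩
    rw [pow_succ, mul_comm, mul_smul, map_nsmul, hy]
    module

theorem ActsTriviallyModTwo.mul {j : ℕ} {b c : Module.End ℤ N} (hb : ActsTriviallyModTwo j b)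
    (hc : ActsTriviallyModTwo j c) : ActsTriviallyModTwo j (b * c) := by
  intro x
  obtain ⟨y, hy⟩ := hc x
  obtain ⟨y₁, hy₁⟩ := hb x
  obtain ⟨y₂, hy₂⟩ := hb (2 • y)
  have hy' : 2 ^ (j + 1) • y = 2 ^ j • 2 • y := by rw [pow_succ, mul_smul]
  refine ⟨y + y₁ + y₂, ?_⟩
  rw [Module.End.mul_apply, hy, map_add, hy₁, hy', hy₂]
  module

theorem ActsTriviallyModTwo.geom_sum_apply {j : ℕ} {b : Module.End ℤ N}
    (hb : ActsTriviallyModTwo j b) (k : ℕ) (x : N) :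
    ∃ y, (∑ i ∈ range (2 ^ k), b ^ i) (2 ^ j • x) = 2 ^ (j + k) • y := by
  induction k generalizing b x with
  | zero => exact ⟨x, by simp⟩
  | succ k ih =>
    obtain ⟨z, hz⟩ := ih (hb.mul hb) x
    obtain ⟨y, hy⟩ := hb.of_le (Nat.le_add_right j k) z
    refine ⟨z + y, ?_⟩
    rw [← sq] at hz
    rw [pow_succ', ← geom_sum_mul_geom_sum_pow, Module.End.mul_apply, hz, geom_sum_two,
      LinearMap.add_apply, hy, Module.End.one_apply, ← add_assoc, pow_succ]
    module

theorem geom_sum_two_pow_eq_zero {m : ℕ} (hm : 3 ≤ m) (hexp : ∀ x : N, 2 ^ m • x = 0)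
    {a : Module.End ℤ N} (h₁ : ActsTriviallyModTwo 1 a) (h₄ : ActsTriviallyModTwo 0 (a ^ 4)) :
    ∑ i ∈ range (2 ^ m), a ^ i = 0 := by
  ext x
  obtain ⟨y, hy⟩ := h₄.geom_sum_apply (m - 2) x
  obtain ⟨z, hz⟩ := (h₁.of_le (by omega : 1 ≤ m - 2)).geom_sum_apply 2 y
  rw [pow_zero, one_smul, zero_add, show 4 = 2 ^ 2 from rfl] at hy
  rw [Nat.sub_add_cancel (by omega), hexp] at hz
  have h2m : 2 ^ m = 2 ^ 2 * 2 ^ (m - 2) := by rw [← pow_add]; congr 1; omega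
  rw [h2m, ← geom_sum_mul_geom_sum_pow, Module.End.mul_apply, hy, hz, LinearMap.zero_apply]

end TwoAdic

theorem ZMod.two_pow_eq_zero (m : ℕ) : (2 : ZMod (2 ^ m)) ^ m = 0 := by
  exact_mod_cast ZMod.natCast_self (2 ^ m)

theorem ZMod.two_pow_pred_ne_zero {m : ℕ} (hm : m ≠ 0) : (2 : ZMod (2 ^ m)) ^ (m - 1) ≠ 0 := by
  have h : ((2 ^ (m - 1) : ℕ) : ZMod (2 ^ m)) ≠ 0 := by
    rw [ne_eq, ZMod.natCast_eq_zero_iff, Nat.pow_dvd_pow_iff_le_right (by norm_num)]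
    omega
  exact_mod_cast h

abbrev C2xC2xC2Pow (m : ℕ) : Type := ZMod 2 × ZMod 2 × ZMod (2 ^ m)

namespace C2xC2xC2Pow

variable {m : ℕ}

theorem two_pow_nsmul_eq_zero (hm : m ≠ 0) (x : C2xC2xC2Pow m) : 2 ^ m • x = 0 := by
  have h2 : (2 : ZMod 2) = 0 := rfl
  simp [Prod.ext_iff, nsmul_eq_mul, h2, ZMod.two_pow_eq_zero, hm]

theorem two_nsmul_eq (x : C2xC2xC2Pow m) : 2 • x = (0, 0, 2 * x.2.2) := by
  have h2 : (2 : ZMod 2) = 0 := rfl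
  simp [Prod.ext_iff, h2, nsmul_eq_mul]

theorem map_two_nsmul (f : Module.End ℤ (C2xC2xC2Pow m)) (x : C2xC2xC2Pow m) :
    f (2 • x) = (0, 0, 2 * x.2.2 * (f (0, 0, 1)).2.2) := by
  have hx : 2 • x = 2 • (x.2.2.val • ((0, 0, 1) : C2xC2xC2Pow m)) := by
    rw [two_nsmul_eq, two_nsmul_eq]
    simp
  rw [hx, map_nsmul, map_nsmul, two_nsmul_eq]
  simp only [nsmul_eq_mul, ZMod.natCast_val, Prod.snd_mul, Prod.snd_zmod_cast, ZMod.cast_id',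
    id_eq, Prod.mk.injEq, true_and]
  ring

theorem odd_apply_zero_zero_one (hm : 2 ≤ m) {f : Module.End ℤ (C2xC2xC2Pow m)}
    (hf : Function.Injective f) : Odd (f (0, 0, 1)).2.2 := by
  rcases Nat.even_or_odd (f (0, 0, 1)).2.2.val with ⟨k, hk⟩ | hodd
  · -- an even scalar would make `f` kill the nonzero element `(0, 0, 2 ^ (m - 1))`
    exfalso
    have hγ : (f (0, 0, 1)).2.2 = 2 * k := by
      rw [← ZMod.natCast_zmod_val (f (0, 0, 1)).2.2, hk]; push_cast; ring
    have hpow : (2 : ZMod (2 ^ m)) ^ (m - 1) = 2 * 2 ^ (m - 2) := by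
      rw [← pow_succ']; congr 1; omega
    have hfx : f (2 • ((0, 0, 2 ^ (m - 2)) : C2xC2xC2Pow m)) = 0 := by
      have h2m : (2 : ZMod (2 ^ m)) ^ (m - 2 + 2) = 0 := by
        rw [Nat.sub_add_cancel hm]; exact ZMod.two_pow_eq_zero m
      rw [map_two_nsmul, hγ]
      simp only [Prod.mk_eq_zero, true_and]
      linear_combination (k : ZMod (2 ^ m)) * h2m
    apply ZMod.two_pow_pred_ne_zero (m := m) (by omega)
    have := congrArg (·.2.2) (hf (hfx.trans (map_zero f).symm))
    simpa [two_nsmul_eq, hpow] using this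
  · rw [← ZMod.natCast_zmod_val (f (0, 0, 1)).2.2]
    exact hodd.natCast

theorem actsTriviallyModTwo_one (hm : 2 ≤ m) {f : Module.End ℤ (C2xC2xC2Pow m)}
    (hf : Function.Injective f) : ActsTriviallyModTwo 1 f := by
  obtain ⟨k, hk⟩ := odd_apply_zero_zero_one hm hf
  intro x
  refine ⟨(0, 0, x.2.2 * k), ?_⟩
  rw [pow_one, map_two_nsmul, hk, two_nsmul_eq]
  simp only [Prod.smul_mk, Prod.mk_add_mk, nsmul_eq_mul, mul_zero, add_zero, Prod.mk.injEq,
    true_and]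
  push_cast
  ring

def reduceModTwo (hm : m ≠ 0) : C2xC2xC2Pow m →+ ZMod 2 × ZMod 2 × ZMod 2 :=
  (AddMonoidHom.id _).prodMap
    ((AddMonoidHom.id _).prodMap (ZMod.castHom (dvd_pow_self 2 hm) (ZMod 2)).toAddMonoidHom)

theorem reduceModTwo_surjective (hm : m ≠ 0) : Function.Surjective (reduceModTwo hm) :=
  Function.surjective_id.prodMap
    (Function.surjective_id.prodMap (ZMod.castHom_surjective (dvd_pow_self 2 hm)))

theorem reduceModTwo_eq_zero_iff (hm : m ≠ 0) {x : C2xC2xC2Pow m} :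
    reduceModTwo hm x = 0 ↔ ∃ y, x = 2 • y := by
  constructor
  · obtain ⟨a, b, c⟩ := x
    intro h
    simp only [reduceModTwo, RingHom.toAddMonoidHom_eq_coe, AddMonoidHom.coe_prodMap,
      AddMonoidHom.coe_id, AddMonoidHom.coe_coe, Prod.map_apply, id_eq, ZMod.castHom_apply,
      Prod.ext_iff, Prod.fst_zero, Prod.snd_zero] at h
    obtain ⟨rfl, rfl, hc⟩ := h
    rw [ZMod.cast_eq_val, ZMod.natCast_eq_zero_iff] at hc
    obtain ⟨t, ht⟩ := hc
    refine ⟨(0, 0, t), ?_⟩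
    rw [two_nsmul_eq, ← ZMod.natCast_zmod_val c, ht]
    simp
  · rintro ⟨y, rfl⟩
    have h2 : ∀ v : ZMod 2 × ZMod 2 × ZMod 2, 2 • v = 0 := by decide
    rw [map_nsmul, h2]

theorem exists_reduceModTwo_comp (hm : m ≠ 0) (f : Module.End ℤ (C2xC2xC2Pow m)) :
    ∃ f' : Module.End (ZMod 2) (ZMod 2 × ZMod 2 × ZMod 2),
      ∀ x, reduceModTwo hm (f x) = f' (reduceModTwo hm x) := by
  let g := (reduceModTwo hm).comp f.toAddMonoidHom
  have hker : (reduceModTwo hm).ker ≤ g.ker := by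
    intro x hx
    obtain ⟨y, rfl⟩ := (reduceModTwo_eq_zero_iff hm).1 hx
    change reduceModTwo hm (f (2 • y)) = 0
    rw [map_nsmul]
    exact (reduceModTwo_eq_zero_iff hm).2 ⟨f y, rfl⟩
  let f' := (reduceModTwo hm).liftOfSurjective (reduceModTwo_surjective hm) ⟨g, hker⟩
  exact ⟨f'.toZModLinearMap 2, fun x => by simp [f', g]⟩

/-- A `2`-element of `GL₃(𝔽₂)` has order dividing `4`. -/
theorem actsTriviallyModTwo_zero_pow_four (hm : m ≠ 0)
    {f : Module.End ℤ (C2xC2xC2Pow m)} {k : ℕ} (hf : f ^ 2 ^ k = 1) :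
    ActsTriviallyModTwo 0 (f ^ 4) := by
  obtain ⟨f', hf'⟩ := exists_reduceModTwo_comp hm f
  have hpow (i : ℕ) (x) : reduceModTwo hm ((f ^ i) x) = (f' ^ i) (reduceModTwo hm x) := by
    induction i generalizing x with
    | zero => rfl
    | succ i ih => rw [pow_succ, Module.End.mul_apply, ih, hf', pow_succ, Module.End.mul_apply]
  have hf'k : f' ^ 2 ^ k = 1 := by
    refine LinearMap.ext fun v => ?_
    obtain ⟨x, rfl⟩ := reduceModTwo_surjective hm v
    rw [← hpow, hf, Module.End.one_apply, Module.End.one_apply]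
  have hf'4 : f' ^ 4 = 1 := Module.End.pow_char_pow_eq_one (e := 2) hf'k (by simp)
  intro x
  rw [pow_zero, one_smul, zero_add, pow_one]
  have hx : reduceModTwo hm ((f ^ 4) x - x) = 0 := by
    rw [map_sub, hpow, hf'4, Module.End.one_apply, sub_self]
  obtain ⟨y, hy⟩ := (reduceModTwo_eq_zero_iff hm).1 hx
  exact ⟨y, by rw [← hy]; abel⟩

theorem orderOf_ne_two_pow_succ (hm : 3 ≤ m) (g : Hol (C2xC2xC2Pow m)) :
    orderOf g ≠ 2 ^ (m + 1) := by
  intro hg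
  set a := AddAut.toIntEnd _ g.right
  have ha : a ^ 2 ^ (m + 1) = 1 := by
    rw [← map_pow, ← Hol.right_pow, ← hg, pow_orderOf_eq_one, SemidirectProduct.one_right, map_one]
  have hg' : g ^ 2 ^ m = 1 := Hol.pow_eq_one_of_geom_sum_eq_zero g <|
    geom_sum_two_pow_eq_zero hm (two_pow_nsmul_eq_zero (by omega))
      (actsTriviallyModTwo_one (by omega) g.right.injective)
      (actsTriviallyModTwo_zero_pow_four (by omega) ha)
  have := orderOf_dvd_of_pow_eq_one hg'
  rw [hg, Nat.pow_dvd_pow_iff_le_right (by norm_num)] at this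
  omega

end C2xC2xC2Pow

/-- Proposition 8.1: for `n ≥ 5`, the holomorph of `C₂ × C₂ × C_{2^{n-2}}` contains
no regular quaternion and no regular dihedral subgroup of order `2 ^ n`. -/
theorem no_regular_quaternion_or_dihedral_subgroup_C2_x_C2_x_C2pow (n : ℕ) (hn : 5 ≤ n) :
    (¬ ∃ G : Subgroup (Hol (ZMod 2 × ZMod 2 × ZMod (2 ^ (n - 2)))),
      IsRegularSubgroup G ∧ Nonempty (G ≃* QuaternionGroup (2 ^ (n - 2)))) ∧
    (¬ ∃ G : Subgroup (Hol (ZMod 2 × ZMod 2 × ZMod (2 ^ (n - 2)))),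
      IsRegularSubgroup G ∧ Nonempty (G ≃* DihedralGroup (2 ^ (n - 1)))) := by
  have hm : 3 ≤ n - 2 := by omega
  refine ⟨?_, ?_⟩ <;> rintro ⟨G, -, ⟨e⟩⟩
  · apply C2xC2xC2Pow.orderOf_ne_two_pow_succ hm (e.symm (QuaternionGroup.a 1) : G)
    rw [Subgroup.orderOf_coe, MulEquiv.orderOf_eq, QuaternionGroup.orderOf_a_one, pow_succ']
  · apply C2xC2xC2Pow.orderOf_ne_two_pow_succ hm (e.symm (DihedralGroup.r 1) : G)
    rw [Subgroup.orderOf_coe, MulEquiv.orderOf_eq, DihedralGroup.orderOf_r_one]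
    congr 1
    omega
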